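/- Let B be a unital C*-algebra and x ∈ B with ‖x‖ ≤ 1. Then x is positive (0 ≤ x) if and only if ‖1 − z • x‖ ≤ 1 for every complex number z with |1 − z| ≤ 1. -/

import Mathlib

/-!
If `0 ≤ x ≤ 1`, the spectrum of `x` lies in `[0, 1]`, and `1 - z t` is a convex combination of `1`
and `1 - z` for `t ∈ [0, 1]`; the functional calculus turns this into `‖1 - z • x‖ ≤ 1`.

Conversely, let `φ` be a functional with `‖φ‖ ≤ 1 = φ 1`. Then `ω = φ x` satisfies
`|1 - z ω| ≤ 1` whenever `|1 - z| ≤ 1`; choosing `z = 1 + w` with `|w| = 1` aligned so that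
`|1 - z ω| = |1 - ω| + |ω|` forces `ω ∈ [0, 1]`. Such functionals are real on self-adjoint elements
(`|φ a + i t|² ≤ ‖a‖² + t²` for all real `t`) and, by Hahn–Banach from characters of `C*(k)`,
realise every spectral value of a normal `k`. Hence `ℑ x` has spectrum `{0}`, so `x` is
self-adjoint, and then `‖1 - x‖ ≤ 1` gives `1 - x ≤ 1`.
-/

open Complex ComplexStarModule

theorem Complex.exists_norm_eq_one_norm_add_mul_eq (a b : ℂ) :
    ∃ w : ℂ, ‖w‖ = 1 ∧ ‖a + w * b‖ = ‖a‖ + ‖b‖ := by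
  rcases eq_or_ne a 0 with rfl | ha
  · exact ⟨1, by simp⟩
  rcases eq_or_ne b 0 with rfl | hb
  · exact ⟨1, by simp⟩
  have ha' : ‖a‖ ≠ 0 := norm_ne_zero_iff.mpr ha
  refine ⟨‖b‖ / ‖a‖ * a / b, ?_, ?_⟩
  · simp [ha', norm_ne_zero_iff.mpr hb]
  · have hwb : ‖b‖ / ‖a‖ * a / b * b = (‖b‖ / ‖a‖ : ℝ) • a := by
      rw [div_mul_cancel₀ _ hb, Complex.real_smul]; push_cast; rfl
    rw [hwb, (SameRay.sameRay_nonneg_smul_right a (by positivity)).norm_add, norm_smul,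
      Real.norm_of_nonneg (by positivity), div_mul_cancel₀ _ ha']

theorem Complex.im_eq_zero_of_forall_norm_one_sub_mul_le_one {ω : ℂ}
    (h : ∀ z : ℂ, ‖1 - z‖ ≤ 1 → ‖1 - z * ω‖ ≤ 1) : ω.im = 0 := by
  obtain ⟨w, hw, hw_add⟩ := exists_norm_eq_one_norm_add_mul_eq (1 - ω) (-ω)
  have hle : dist 0 ω + dist ω 1 ≤ dist (0 : ℂ) 1 := by
    have := h (1 + w) (by simpa using hw.le)
    rw [show 1 - (1 + w) * ω = (1 - ω) + w * -ω by ring, hw_add, norm_neg] at this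
    simpa [dist_eq_norm, norm_sub_rev, add_comm] using this
  obtain ⟨t, -, rfl⟩ := dist_add_dist_eq_iff.mp (hle.antisymm (dist_triangle _ _ _))
  simp [AffineMap.lineMap_apply_module]

open scoped ComplexOrder in
theorem Complex.norm_one_sub_mul_le_one {z μ : ℂ} (hz : ‖1 - z‖ ≤ 1) (hμ : 0 ≤ μ)
    (hμ1 : ‖μ‖ ≤ 1) : ‖1 - z * μ‖ ≤ 1 := by
  obtain ⟨t, rfl⟩ : ∃ t : ℝ, (t : ℂ) = μ := ⟨μ.re, (eq_re_of_ofReal_le hμ).symm⟩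
  rw [norm_real, Real.norm_eq_abs, abs_le] at hμ1
  calc ‖1 - z * t‖ = ‖((1 - t : ℝ) : ℂ) + t * (1 - z)‖ := by push_cast; ring_nf
    _ ≤ (1 - t) + t * ‖1 - z‖ := by
        refine (norm_add_le _ _).trans_eq ?_
        rw [norm_mul, norm_real, norm_real, Real.norm_of_nonneg (by linarith),
          Real.norm_of_nonneg (by exact_mod_cast hμ)]
    _ ≤ 1 := by nlinarith [Complex.zero_le_real.mp hμ]

theorem CStarRing.norm_one_le_one {E : Type*} [NormedRing E] [StarRing E] [CStarRing E] :
    ‖(1 : E)‖ ≤ 1 := by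
  rcases subsingleton_or_nontrivial E with _ | _
  · simp [Subsingleton.elim (1 : E) 0]
  · exact (CStarRing.norm_one).le

section

variable {B : Type*} [CStarAlgebra B]

theorem IsSelfAdjoint.norm_add_smul_one_sq_le {a : B} (ha : IsSelfAdjoint a) (t : ℝ) :
    ‖a + (t * I) • (1 : B)‖ ^ 2 ≤ ‖a‖ ^ 2 + t ^ 2 := by
  have hstar : star (a + (t * I) • (1 : B)) * (a + (t * I) • 1) = a * a + (t ^ 2 : ℂ) • 1 := by
    have hconj : star (t * I : ℂ) = -(t * I) := by simp
    have hsq : -(t * I) * (t * I) = (t ^ 2 : ℂ) := by linear_combination (-(t : ℂ) ^ 2) * I_sq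
    rw [← hsq]
    simp only [star_add, star_smul, star_one, ha.star_eq, hconj, add_mul, mul_add,
      smul_mul_assoc, mul_smul_comm, one_mul, mul_one]
    module
  calc ‖a + (t * I) • (1 : B)‖ ^ 2 = ‖a * a + (t ^ 2 : ℂ) • (1 : B)‖ := by
        rw [sq, ← CStarRing.norm_star_mul_self, hstar]
    _ ≤ ‖a * a‖ + ‖(t ^ 2 : ℂ)‖ * ‖(1 : B)‖ := norm_add_le_of_le le_rfl (norm_smul_le _ _)
    _ ≤ ‖a‖ ^ 2 + t ^ 2 := by
        gcongr
        · exact (norm_mul_le a a).trans_eq (sq _).symm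
        · rw [norm_pow, norm_real, Real.norm_eq_abs, sq_abs]
          exact mul_le_of_le_one_right (sq_nonneg t) CStarRing.norm_one_le_one

theorem ContinuousLinearMap.im_apply_eq_zero_of_isSelfAdjoint {φ : B →L[ℂ] ℂ} (hφ : ‖φ‖ ≤ 1)
    (hφ1 : φ 1 = 1) {a : B} (ha : IsSelfAdjoint a) : (φ a).im = 0 := by
  set β := (φ a).im
  have key : ∀ t : ℝ, (β + t) ^ 2 ≤ ‖a‖ ^ 2 + t ^ 2 := fun t => calc
    (β + t) ^ 2 = (φ (a + (t * I) • 1)).im ^ 2 := by simp [β, hφ1]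
    _ ≤ ‖φ (a + (t * I) • 1)‖ ^ 2 := by
        rw [← sq_abs]
        gcongr
        exact abs_im_le_norm _
    _ ≤ ‖a + (t * I) • (1 : B)‖ ^ 2 := by
        gcongr
        exact φ.le_of_opNorm_le hφ _ |>.trans_eq (one_mul _)
    _ ≤ ‖a‖ ^ 2 + t ^ 2 := ha.norm_add_smul_one_sq_le t
  -- `key` says `β ^ 2 + 2 * β * t ≤ ‖a‖ ^ 2` for every real `t`
  by_contra hβ
  have hkey := key (‖a‖ ^ 2 / β)
  have hcancel : β * (‖a‖ ^ 2 / β) = ‖a‖ ^ 2 := mul_div_cancel₀ _ hβ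
  nlinarith [sq_pos_of_ne_zero hβ]

theorem exists_functional_apply_eq_of_mem_spectrum {k : B} [IsStarNormal k] {μ : ℂ}
    (hμ : μ ∈ spectrum ℂ k) : ∃ φ : B →L[ℂ] ℂ, ‖φ‖ ≤ 1 ∧ φ 1 = 1 ∧ φ k = μ := by
  let f := (StarAlgebra.elemental.characterSpaceHomeo k).symm ⟨μ, hμ⟩
  have hfk : f ⟨k, StarAlgebra.elemental.self_mem ℂ k⟩ = μ :=
    congrArg Subtype.val ((StarAlgebra.elemental.characterSpaceHomeo k).apply_symm_apply ⟨μ, hμ⟩)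
  let p : Submodule ℂ B := (StarAlgebra.elemental ℂ k).toSubalgebra.toSubmodule
  obtain ⟨φ, hφ_ext, hφ_norm⟩ :=
    exists_extension_norm_eq p (WeakDual.toStrongDual (f : WeakDual ℂ (StarAlgebra.elemental ℂ k)))
  refine ⟨φ, ?_, ?_, ?_⟩
  · rw [hφ_norm]
    exact (WeakDual.CharacterSpace.norm_le_norm_one f).trans CStarRing.norm_one_le_one
  · exact (hφ_ext (1 : StarAlgebra.elemental ℂ k)).trans (map_one f)
  · exact (hφ_ext ⟨k, StarAlgebra.elemental.self_mem ℂ k⟩).trans hfk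

theorem eq_zero_of_forall_functional_apply_eq_zero {a : B} [IsStarNormal a]
    (h : ∀ φ : B →L[ℂ] ℂ, ‖φ‖ ≤ 1 → φ 1 = 1 → φ a = 0) : a = 0 :=
  CFC.eq_zero_of_spectrum_subset_zero (R := ℂ) a fun μ hμ => by
    obtain ⟨φ, hφ, hφ1, hφa⟩ := exists_functional_apply_eq_of_mem_spectrum hμ
    rw [Set.mem_singleton_iff, ← hφa, h φ hφ hφ1]

theorem isSelfAdjoint_of_forall_functional_im_apply_eq_zero {x : B}
    (h : ∀ φ : B →L[ℂ] ℂ, ‖φ‖ ≤ 1 → φ 1 = 1 → (φ x).im = 0) : IsSelfAdjoint x := by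
  rw [← imaginaryPart_eq_zero_iff, ← Subtype.coe_inj, ZeroMemClass.coe_zero]
  refine eq_zero_of_forall_functional_apply_eq_zero fun φ hφ hφ1 => Complex.ext ?_
    (φ.im_apply_eq_zero_of_isSelfAdjoint hφ hφ1 (ℑ x).2)
  have hx := congrArg (fun y => (φ y).im) (realPart_add_I_smul_imaginaryPart x)
  simpa [φ.im_apply_eq_zero_of_isSelfAdjoint hφ hφ1 (ℜ x).2, h φ hφ hφ1] using hx

variable [PartialOrder B] [StarOrderedRing B]

theorem IsSelfAdjoint.nonneg_of_norm_one_sub_le_one {x : B} (hx : IsSelfAdjoint x)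
    (h : ‖1 - x‖ ≤ 1) : 0 ≤ x := by
  rw [← sub_le_self_iff (1 : B)]
  calc 1 - x ≤ algebraMap ℝ B ‖1 - x‖ := ((IsSelfAdjoint.one B).sub hx).le_algebraMap_norm_self
    _ ≤ algebraMap ℝ B 1 := algebraMap_mono (β := B) h
    _ = 1 := map_one _

open scoped ComplexOrder in
theorem norm_one_sub_smul_le_one_of_nonneg {x : B} (hx0 : 0 ≤ x) (hx : ‖x‖ ≤ 1) {z : ℂ}
    (hz : ‖1 - z‖ ≤ 1) : ‖1 - z • x‖ ≤ 1 := by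
  have hcfc : 1 - z • x = cfc (fun μ : ℂ => 1 - z * μ) x := by
    rw [cfc_sub .., cfc_const_mul_id .., cfc_const .., map_one]
  rw [hcfc]
  exact norm_cfc_le zero_le_one fun μ hμ => Complex.norm_one_sub_mul_le_one hz
    (spectrum_nonneg_of_nonneg hx0 hμ) ((spectrum.norm_le_norm_mul_of_mem hμ).trans
      (mul_le_one₀ hx (norm_nonneg _) CStarRing.norm_one_le_one))

end

theorem positive_iff_norm_one_sub_smul {B : Type*} [CStarAlgebra B]
    [PartialOrder B] [StarOrderedRing B] (x : B) (hx : ‖x‖ ≤ 1) :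
    0 ≤ x ↔ ∀ z : ℂ, ‖1 - z‖ ≤ 1 → ‖1 - z • x‖ ≤ 1 := by
  refine ⟨fun hx0 z hz => norm_one_sub_smul_le_one_of_nonneg hx0 hx hz, fun h => ?_⟩
  have hsa : IsSelfAdjoint x := isSelfAdjoint_of_forall_functional_im_apply_eq_zero
    fun φ hφ hφ1 => Complex.im_eq_zero_of_forall_norm_one_sub_mul_le_one fun z hz => calc
      ‖1 - z * φ x‖ = ‖φ (1 - z • x)‖ := by simp [hφ1]
      _ ≤ ‖1 - z • x‖ := φ.le_of_opNorm_le hφ _ |>.trans_eq (one_mul _)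
      _ ≤ 1 := h z hz
  exact hsa.nonneg_of_norm_one_sub_le_one (by simpa using h 1 (by simp))
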